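/- Let f : ℝ³ → ℝ be defined by f(x,y,σ) = x + 6yσ − x³ − 21(xσ² − (1/8)xy⁴ + (1/3)y³σ − (1/40)x⁵). Then |∇_H f(0,0,0)|² = 1, and there exists ρ > 0 such that |∇_H f(x,y,σ)|² < 1 for every (x,y,σ) with 0 < x² + y² + σ² < ρ². In other words, |∇_H f|² has a strict local maximum, equal to 1, at the origin. -/

import Mathlib

noncomputable section

/-- Partial derivative `∂_x` on `ℝ³ = ℝ × ℝ × ℝ` with coordinates `(x, y, σ)`. -/
def Dx (f : ℝ × ℝ × ℝ → ℝ) (p : ℝ × ℝ × ℝ) : ℝ := fderiv ℝ f p (1, 0, 0)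

/-- Partial derivative `∂_y`. -/
def Dy (f : ℝ × ℝ × ℝ → ℝ) (p : ℝ × ℝ × ℝ) : ℝ := fderiv ℝ f p (0, 1, 0)

/-- Partial derivative `∂_σ`. -/
def Ds (f : ℝ × ℝ × ℝ → ℝ) (p : ℝ × ℝ × ℝ) : ℝ := fderiv ℝ f p (0, 0, 1)

/-- The left-invariant horizontal vector field `X₁ = ∂_x − (y/2)∂_σ` of `ℍ¹`. -/
def X1 (f : ℝ × ℝ × ℝ → ℝ) (p : ℝ × ℝ × ℝ) : ℝ := Dx f p - p.2.1 / 2 * Ds f p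

/-- The left-invariant horizontal vector field `X₂ = ∂_y + (x/2)∂_σ` of `ℍ¹`. -/
def X2 (f : ℝ × ℝ × ℝ → ℝ) (p : ℝ × ℝ × ℝ) : ℝ := Dy f p + p.1 / 2 * Ds f p

/-- The right-invariant horizontal vector field `X̃₁ = ∂_x + (y/2)∂_σ` of `ℍ¹`. -/
def X1r (f : ℝ × ℝ × ℝ → ℝ) (p : ℝ × ℝ × ℝ) : ℝ := Dx f p + p.2.1 / 2 * Ds f p

/-- The right-invariant horizontal vector field `X̃₂ = ∂_y − (x/2)∂_σ` of `ℍ¹`. -/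
def X2r (f : ℝ × ℝ × ℝ → ℝ) (p : ℝ × ℝ × ℝ) : ℝ := Dy f p - p.1 / 2 * Ds f p

/-- The horizontal Laplacian `Δ_H = X₁² + X₂²` of `ℍ¹`. -/
def lapH (f : ℝ × ℝ × ℝ → ℝ) (p : ℝ × ℝ × ℝ) : ℝ := X1 (X1 f) p + X2 (X2 f) p

/-- The left carré du champ `|∇_H f|² = (X₁f)² + (X₂f)²`. -/
def gammaL (f : ℝ × ℝ × ℝ → ℝ) (p : ℝ × ℝ × ℝ) : ℝ := (X1 f p) ^ 2 + (X2 f p) ^ 2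

/-- The right carré du champ `|∇̃_H f|² = (X̃₁f)² + (X̃₂f)²`. -/
def gammaR (f : ℝ × ℝ × ℝ → ℝ) (p : ℝ × ℝ × ℝ) : ℝ := (X1r f p) ^ 2 + (X2r f p) ^ 2

/-- The counterexample function
`f(x,y,σ) = x + 6yσ − x³ − 21(xσ² − (1/8)xy⁴ + (1/3)y³σ − (1/40)x⁵)`. -/
def fex : ℝ × ℝ × ℝ → ℝ := fun p =>
  p.1 + 6 * p.2.1 * p.2.2 - p.1 ^ 3
    - 21 * (p.1 * p.2.2 ^ 2 - (1 / 8) * p.1 * p.2.1 ^ 4 + (1 / 3) * p.2.1 ^ 3 * p.2.2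
      - (1 / 40) * p.1 ^ 5)


set_option maxHeartbeats 1000000 in
private lemma hasFDerivAt_pow'' {f : ℝ × ℝ × ℝ → ℝ} {f' : ℝ × ℝ × ℝ →L[ℝ] ℝ} {p : ℝ × ℝ × ℝ}
    (h : HasFDerivAt f f' p) (n : ℕ) :
    HasFDerivAt (fun q => f q ^ n) (((n : ℝ) * f p ^ (n - 1)) • f') p :=
  (hasDerivAt_pow n (f p)).comp_hasFDerivAt p h

set_option maxHeartbeats 1000000 in
private lemma fex_X1X2 (p : ℝ × ℝ × ℝ) :
    X1 fex p = 1 - 3 * p.1 ^ 2 - 3 * p.2.1 ^ 2 - 21 * p.2.2 ^ 2 + 21 * p.1 * p.2.1 * p.2.2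
        + 21 / 8 * p.1 ^ 4 + 49 / 8 * p.2.1 ^ 4 ∧
    X2 fex p = 6 * p.2.2 + 3 * p.1 * p.2.1 + 7 * p.1 * p.2.1 ^ 3
        - 21 * (p.1 ^ 2 + p.2.1 ^ 2) * p.2.2 := by
  have hx : HasFDerivAt (fun q : ℝ × ℝ × ℝ => q.1)
      (ContinuousLinearMap.fst ℝ ℝ (ℝ × ℝ)) p := hasFDerivAt_fst
  have hy : HasFDerivAt (fun q : ℝ × ℝ × ℝ => q.2.1)
      ((ContinuousLinearMap.fst ℝ ℝ ℝ).comp (ContinuousLinearMap.snd ℝ ℝ (ℝ × ℝ))) p :=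
    hasFDerivAt_fst.comp p hasFDerivAt_snd
  have hs : HasFDerivAt (fun q : ℝ × ℝ × ℝ => q.2.2)
      ((ContinuousLinearMap.snd ℝ ℝ ℝ).comp (ContinuousLinearMap.snd ℝ ℝ (ℝ × ℝ))) p :=
    hasFDerivAt_snd.comp p hasFDerivAt_snd
  have hfex : HasFDerivAt fex _ p :=
    ((hx.add ((hy.const_mul 6).mul hs)).sub (hasFDerivAt_pow'' hx 3)).sub
      (((((hx.mul (hasFDerivAt_pow'' hs 2)).sub
          ((hx.const_mul (1/8)).mul (hasFDerivAt_pow'' hy 4))).add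
        (((hasFDerivAt_pow'' hy 3).const_mul (1/3)).mul hs)).sub
        ((hasFDerivAt_pow'' hx 5).const_mul (1/40))).const_mul 21)
  constructor
  · show fderiv ℝ fex p (1,0,0) - p.2.1 / 2 * fderiv ℝ fex p (0,0,1) = _
    rw [hfex.fderiv]
    simp
    ring
  · show fderiv ℝ fex p (0,1,0) + p.1 / 2 * fderiv ℝ fex p (0,0,1) = _
    rw [hfex.fderiv]
    simp
    ring

set_option maxHeartbeats 1000000 in
private lemma key_ineq (x y σ : ℝ) (h0 : 0 < x^2 + y^2 + σ^2)
    (h1 : x^2 + y^2 + σ^2 < (1/100)^2) :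
    (1 - (3*x^2 + 3*y^2 + 21*σ^2 - 21*x*y*σ - 21/8*x^4 - 49/8*y^4))^2
      + (6*σ + (3*x*y + 7*x*y^3 - 21*(x^2+y^2)*σ))^2 < 1 := by
  have hx2 : x^2 ≤ x^2 + y^2 + σ^2 := by nlinarith [sq_nonneg y, sq_nonneg σ]
  have hy2 : y^2 ≤ x^2 + y^2 + σ^2 := by nlinarith [sq_nonneg x, sq_nonneg σ]
  have hσ2 : σ^2 ≤ x^2 + y^2 + σ^2 := by nlinarith [sq_nonneg x, sq_nonneg y]
  have hx2' : x^2 ≤ 1/10000 := by nlinarith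
  have hy2' : y^2 ≤ 1/10000 := by nlinarith
  have hσ2' : σ^2 ≤ 1/10000 := by nlinarith
  have hσu : σ ≤ 1/100 := by nlinarith
  have hσl : -(1/100) ≤ σ := by nlinarith
  have hr0 : (0:ℝ) ≤ x^2 + y^2 := by positivity
  -- |x y σ| ≤ (x²+y²)/200
  have hcubu : x*y*σ ≤ (1/200)*(x^2+y^2) := by
    nlinarith [mul_nonneg (by linarith : (0:ℝ) ≤ 1/100 - σ) (sq_nonneg (x+y)),
      mul_nonneg (by linarith : (0:ℝ) ≤ 1/100 + σ) (sq_nonneg (x-y))]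
  have hcubl : -((1/200)*(x^2+y^2)) ≤ x*y*σ := by
    nlinarith [mul_nonneg (by linarith : (0:ℝ) ≤ 1/100 + σ) (sq_nonneg (x+y)),
      mul_nonneg (by linarith : (0:ℝ) ≤ 1/100 - σ) (sq_nonneg (x-y))]
  -- quartic bounds
  have hq4x : x^4 ≤ (1/10000)*x^2 := by
    nlinarith [mul_le_mul_of_nonneg_right hx2' (sq_nonneg x)]
  have hq4y : y^4 ≤ (1/10000)*y^2 := by
    nlinarith [mul_le_mul_of_nonneg_right hy2' (sq_nonneg y)]
  -- xy bounds
  have hxyu : x*y ≤ (1/2)*(x^2+y^2) := by nlinarith [sq_nonneg (x-y)]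
  have hxyl : -((1/2)*(x^2+y^2)) ≤ x*y := by nlinarith [sq_nonneg (x+y)]
  -- x y³ bounds
  have hxy3u : x*y^3 ≤ (1/20000)*(x^2+y^2) := by
    nlinarith [mul_nonneg (sq_nonneg (x-y)) (sq_nonneg y),
      mul_le_mul_of_nonneg_left hy2' hr0]
  have hxy3l : -((1/20000)*(x^2+y^2)) ≤ x*y^3 := by
    nlinarith [mul_nonneg (sq_nonneg (x+y)) (sq_nonneg y),
      mul_le_mul_of_nonneg_left hy2' hr0]
  -- σ(x²+y²) bounds
  have hsxyu : (x^2+y^2)*σ ≤ (1/100)*(x^2+y^2) := by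
    nlinarith [mul_nonneg (by linarith : (0:ℝ) ≤ 1/100 - σ) hr0]
  have hsxyl : -((1/100)*(x^2+y^2)) ≤ (x^2+y^2)*σ := by
    nlinarith [mul_nonneg (by linarith : (0:ℝ) ≤ 1/100 + σ) hr0]
  -- claim 1 : 2q ≥ 5(x²+y²) + 41σ²
  have c1 : 5*(x^2+y^2) + 41*σ^2 ≤
      2*(3*x^2 + 3*y^2 + 21*σ^2 - 21*x*y*σ - 21/8*x^4 - 49/8*y^4) := by
    linarith [hcubl, hq4x, hq4y, sq_nonneg x, sq_nonneg y]
  have hq0 : 0 ≤ 3*x^2 + 3*y^2 + 21*σ^2 - 21*x*y*σ - 21/8*x^4 - 49/8*y^4 := by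
    linarith [c1, sq_nonneg x, sq_nonneg y, sq_nonneg σ]
  have hq22 : 3*x^2 + 3*y^2 + 21*σ^2 - 21*x*y*σ - 21/8*x^4 - 49/8*y^4
      ≤ 22*(x^2 + y^2 + σ^2) := by
    linarith [hcubu, hcubl, sq_nonneg (x^2), sq_nonneg (y^2)]
  have hq2 : (3*x^2 + 3*y^2 + 21*σ^2 - 21*x*y*σ - 21/8*x^4 - 49/8*y^4)^2
      ≤ 484*(x^2 + y^2 + σ^2)^2 := by
    linarith [mul_le_mul hq22 hq22 hq0 (by positivity : (0:ℝ) ≤ 22*(x^2+y^2+σ^2))]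
  -- bounds on w
  have hwu : 3*x*y + 7*x*y^3 - 21*(x^2+y^2)*σ ≤ 2*(x^2+y^2) := by
    linarith [hxyu, hxy3u, hsxyl]
  have hwl : -(2*(x^2+y^2)) ≤ 3*x*y + 7*x*y^3 - 21*(x^2+y^2)*σ := by
    linarith [hxyl, hxy3l, hsxyu]
  -- w² ≤ 4(x²+y²)² ≤ (x²+y²)·(8/10000)
  have hw2 : (3*x*y + 7*x*y^3 - 21*(x^2+y^2)*σ)^2 ≤ (8/10000)*(x^2+y^2) := by
    have h4 : (3*x*y + 7*x*y^3 - 21*(x^2+y^2)*σ)^2 ≤ 4*(x^2+y^2)^2 := by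
      linarith [mul_nonneg (by linarith : (0:ℝ) ≤ 2*(x^2+y^2) - (3*x*y + 7*x*y^3 - 21*(x^2+y^2)*σ))
        (by linarith : (0:ℝ) ≤ 2*(x^2+y^2) + (3*x*y + 7*x*y^3 - 21*(x^2+y^2)*σ))]
    have h5 : (x^2+y^2)^2 ≤ (2/10000)*(x^2+y^2) := by
      linarith [mul_le_mul_of_nonneg_left (by linarith : x^2+y^2 ≤ 2/10000) hr0]
    linarith
  -- σw bound
  have hσw : σ * (3*x*y + 7*x*y^3 - 21*(x^2+y^2)*σ) ≤ (6/100)*(x^2+y^2) := by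
    have hp := mul_nonneg (by linarith : (0:ℝ) ≤ 1/100 - σ)
        (by linarith : (0:ℝ) ≤ 2*(x^2+y^2) + (3*x*y + 7*x*y^3 - 21*(x^2+y^2)*σ))
    linarith [hp, hwu, hwl, hsxyl]
  -- claim 3
  have c3 : (6*σ + (3*x*y + 7*x*y^3 - 21*(x^2+y^2)*σ))^2 ≤ 36*σ^2 + (x^2+y^2) := by
    linarith [hσw, hw2]
  have hss : (x^2 + y^2 + σ^2)^2 < (x^2 + y^2 + σ^2) * (1/10000) := by
    have hp := mul_lt_mul_of_pos_left h1 h0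
    nlinarith [hp]
  linarith [c1, hq2, c3, hss, h0]

/-- The left carré du champ of `fex` has a strict local maximum, equal to `1`, at the
origin: `|∇_H f(0)|² = 1` and `|∇_H f|² < 1` on a punctured Euclidean neighbourhood of
the origin. -/
theorem fex_left_carre_strict_local_max :
    gammaL fex (0, 0, 0) = 1 ∧
    ∃ ρ : ℝ, 0 < ρ ∧ ∀ p : ℝ × ℝ × ℝ,
      0 < p.1 ^ 2 + p.2.1 ^ 2 + p.2.2 ^ 2 →
      p.1 ^ 2 + p.2.1 ^ 2 + p.2.2 ^ 2 < ρ ^ 2 →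
      gammaL fex p < 1 := by
  constructor
  · have h := fex_X1X2 (0, 0, 0)
    unfold gammaL
    rw [h.1, h.2]
    norm_num
  · refine ⟨1/100, by norm_num, fun p h0 h1 => ?_⟩
    have h := fex_X1X2 p
    have hk := key_ineq p.1 p.2.1 p.2.2 h0 h1
    unfold gammaL
    rw [h.1, h.2]
    nlinarith [hk]
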